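/- arXiv:2405.10801 — 3 statements merged into one kernel-verified Lean document; each statement's English description precedes it below -/
import Mathlib

section
/- In the equational theory of the RMC, for distinct locations a ≠ b, the permutation equations [s]a;[t]b = [t]b;[s]a and a<s>;b<t> = b<t>;a<s> are derivable (from the axiom [s]a;b<t> = b<t>;[s]a together with the η, ν and β axioms). -/
namespace RMC


/-- Algebraic terms (values) over a single-sorted first-order signature:
`F` is the set of function symbols, `ar` gives arities. Variables are natural numbers. -/
inductive Val (F : Type) (ar : F → ℕ) : Type
  | var : ℕ → Val F ar
  | app : (f : F) → (Fin (ar f) → Val F ar) → Val F ar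

variable {F : Type} {ar : F → ℕ}

/-- Substitutions, as total maps from variables to values. -/
abbrev Subst (F : Type) (ar : F → ℕ) := ℕ → Val F ar

/-- Applying a substitution to a value. -/
def Val.subst (σ : Subst F ar) : Val F ar → Val F ar
  | .var x => σ x
  | .app f v => .app f fun i => (v i).subst σ

/-- The identity (empty) substitution. -/
def idS : Subst F ar := Val.var

/-- The single substitution {t/x}. -/
def Subst.single (x : ℕ) (t : Val F ar) : Subst F ar :=
  Function.update Val.var x t

/-- Composition of substitutions: `comp τ σ` is τσ (first σ, then τ). -/
def Subst.comp (τ σ : Subst F ar) : Subst F ar := fun x => (σ x).subst τ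

/-- Free variables of a value. -/
def Val.fv : Val F ar → Set ℕ
  | .var x => {x}
  | .app _ v => ⋃ i, (v i).fv

/-- Computation terms of the Relational Machine Calculus, with locations
indexed by natural numbers: skip `*`, failure `0`, sequencing `M;N`,
Kleene star `M*`, sum `M+N`, push `[t]a`, pop `a<t>`, and new-variable `Ex.M`. -/
inductive Tm (F : Type) (ar : F → ℕ) : Type
  | skip
  | fail
  | seq (M N : Tm F ar)
  | star (M : Tm F ar)
  | sum (M N : Tm F ar)
  | push (t : Val F ar) (a : ℕ)
  | pop (a : ℕ) (t : Val F ar)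
  | nu (x : ℕ) (M : Tm F ar)

/-- Applying a substitution to a term (naive, global variables). -/
def Tm.subst (σ : Subst F ar) : Tm F ar → Tm F ar
  | .skip => .skip
  | .fail => .fail
  | .seq M N => .seq (M.subst σ) (N.subst σ)
  | .star M => .star (M.subst σ)
  | .sum M N => .sum (M.subst σ) (N.subst σ)
  | .push t a => .push (t.subst σ) a
  | .pop a t => .pop a (t.subst σ)
  | .nu x M => .nu x (M.subst σ)

/-- Free variables of a term; `Ex.M` binds x. -/
def Tm.fv : Tm F ar → Set ℕ
  | .skip => ∅
  | .fail => ∅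
  | .seq M N => M.fv ∪ N.fv
  | .star M => M.fv
  | .sum M N => M.fv ∪ N.fv
  | .push t _ => t.fv
  | .pop _ t => t.fv
  | .nu x M => M.fv \ {x}

/-- Duality: the syntactic involution exchanging push and pop and reversing
sequential composition. -/
def Tm.dagger : Tm F ar → Tm F ar
  | .skip => .skip
  | .fail => .fail
  | .seq M N => .seq N.dagger M.dagger
  | .star M => .star M.dagger
  | .sum M N => .sum M.dagger N.dagger
  | .push t a => .pop a t
  | .pop a t => .push t a
  | .nu x M => .nu x M.dagger

/-- n-fold sequential composition Mⁿ. -/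
def Tm.pow (M : Tm F ar) : ℕ → Tm F ar
  | 0 => .skip
  | n+1 => .seq M (M.pow n)

/-- `[t₁]a; … ;[tₙ]a; M` -/
def pushSeqThen (a : ℕ) (ts : List (Val F ar)) (M : Tm F ar) : Tm F ar :=
  ts.foldr (fun t K => .seq (.push t a) K) M

/-- `a<tₙ>; … ;a<t₁>; M` (note the inversion). -/
def popSeqThen (a : ℕ) (ts : List (Val F ar)) (M : Tm F ar) : Tm F ar :=
  ts.foldl (fun K t => .seq (.pop a t) K) M

/-- `[t₁]a; … ;[tₙ]a` -/
def pushSeq (a : ℕ) (ts : List (Val F ar)) : Tm F ar := pushSeqThen a ts .skip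

/-- `a<tₙ>; … ;a<t₁>` -/
def popSeq (a : ℕ) (ts : List (Val F ar)) : Tm F ar := popSeqThen a ts .skip

/-- `Ex₁…Exₙ.M` -/
def nuList (xs : List ℕ) (M : Tm F ar) : Tm F ar := xs.foldr .nu M

/-- A memory: a family of stacks (lists of values, head of the list = head of
the stack) indexed by locations. -/
abbrev Mem (F : Type) (ar : F → ℕ) := ℕ → List (Val F ar)

/-- Applying a substitution to a memory. -/
def Mem.subst (σ : Subst F ar) (S : Mem F ar) : Mem F ar := fun a => (S a).map (Val.subst σ)

/-- Free variables of a memory. -/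
def Mem.fv (S : Mem F ar) : Set ℕ := ⋃ a, ⋃ t ∈ S a, Val.fv t

/-- The empty memory. -/
def emptyMem : Mem F ar := fun _ => []


/-- The equational theory of the RMC: the least congruence generated by the
axioms of Kleene algebra, the new-variable axioms, the β-, η- and
unification-axioms, and the permutation axiom.  (The inequation `M ≤ N` is
encoded as `M + N = N`.) -/
inductive TmEq : Tm F ar → Tm F ar → Prop
  -- congruence
  | refl (M : Tm F ar) : TmEq M M
  | symm {M N : Tm F ar} : TmEq M N → TmEq N M
  | trans {M N P : Tm F ar} : TmEq M N → TmEq N P → TmEq M P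
  | seq_congr {M M' N N' : Tm F ar} : TmEq M M' → TmEq N N' → TmEq (.seq M N) (.seq M' N')
  | sum_congr {M M' N N' : Tm F ar} : TmEq M M' → TmEq N N' → TmEq (.sum M N) (.sum M' N')
  | star_congr {M M' : Tm F ar} : TmEq M M' → TmEq (.star M) (.star M')
  | nu_congr {M M' : Tm F ar} (x : ℕ) : TmEq M M' → TmEq (.nu x M) (.nu x M')
  -- Kleene algebra: idempotent semiring
  | seq_assoc (M N P : Tm F ar) : TmEq (.seq (.seq M N) P) (.seq M (.seq N P))
  | seq_skip_l (M : Tm F ar) : TmEq (.seq .skip M) M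
  | seq_skip_r (M : Tm F ar) : TmEq (.seq M .skip) M
  | sum_assoc (M N P : Tm F ar) : TmEq (.sum (.sum M N) P) (.sum M (.sum N P))
  | sum_comm (M N : Tm F ar) : TmEq (.sum M N) (.sum N M)
  | sum_idem (M : Tm F ar) : TmEq (.sum M M) M
  | sum_zero (M : Tm F ar) : TmEq (.sum M .fail) M
  | dist_l (M N P : Tm F ar) : TmEq (.seq P (.sum M N)) (.sum (.seq P M) (.seq P N))
  | dist_r (M N P : Tm F ar) : TmEq (.seq (.sum M N) P) (.sum (.seq M P) (.seq N P))
  | zero_seq (M : Tm F ar) : TmEq (.seq .fail M) .fail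
  | seq_zero (M : Tm F ar) : TmEq (.seq M .fail) .fail
  -- Kleene algebra: star
  | star_unfold_l (M : Tm F ar) : TmEq (.star M) (.sum .skip (.seq M (.star M)))
  | star_unfold_r (M : Tm F ar) : TmEq (.star M) (.sum .skip (.seq (.star M) M))
  | star_ind_l {M N : Tm F ar} :
      TmEq (.sum (.seq M N) N) N → TmEq (.sum (.seq (.star M) N) N) N
  | star_ind_r {M N : Tm F ar} :
      TmEq (.sum (.seq M N) M) M → TmEq (.sum (.seq M (.star N)) M) M
  -- new variable
  | nu_elim {x : ℕ} {M : Tm F ar} : x ∉ Tm.fv M → TmEq (.nu x M) M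
  | nu_seq_l {x : ℕ} {M N : Tm F ar} : x ∉ Tm.fv M →
      TmEq (.seq M (.nu x N)) (.nu x (.seq M N))
  | nu_seq_r {x : ℕ} {M N : Tm F ar} : x ∉ Tm.fv N →
      TmEq (.seq (.nu x M) N) (.nu x (.seq M N))
  | nu_sum (x : ℕ) (M N : Tm F ar) : TmEq (.nu x (.sum M N)) (.sum (.nu x M) (.nu x N))
  | nu_swap (x y : ℕ) (M : Tm F ar) : TmEq (.nu x (.nu y M)) (.nu y (.nu x M))
  -- β and unification
  | beta_l {x : ℕ} {t : Val F ar} (a : ℕ) (N M : Tm F ar) : x ∉ Val.fv t →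
      TmEq (.nu x (.seq N (.seq (.push t a) (.seq (.pop a (.var x)) M))))
        (Tm.subst (Subst.single x t) (.seq N M))
  | beta_r {x : ℕ} {t : Val F ar} (a : ℕ) (N M : Tm F ar) : x ∉ Val.fv t →
      TmEq (.nu x (.seq N (.seq (.push (.var x) a) (.seq (.pop a t) M))))
        (Tm.subst (Subst.single x t) (.seq N M))
  | eta (x a : ℕ) :
      TmEq (.sum (.nu x (.seq (.pop a (.var x)) (.push (.var x) a))) .skip) .skip
  | ups_var (x a : ℕ) : TmEq (.seq (.push (.var x) a) (.pop a (.var x))) .skip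
  | ups_app (a : ℕ) (f : F) (v w : Fin (ar f) → Val F ar) :
      TmEq (.seq (.push (.app f v) a) (.pop a (.app f w)))
        (.seq (pushSeq a (List.ofFn v)) (popSeq a (List.ofFn w)))
  | ups_clash (a : ℕ) {f g : F} (v : Fin (ar f) → Val F ar) (w : Fin (ar g) → Val F ar) :
      f ≠ g → TmEq (.seq (.push (.app f v) a) (.pop a (.app g w))) .fail
  | occ_l (a : ℕ) {x : ℕ} {f : F} {v : Fin (ar f) → Val F ar} :
      x ∈ Val.fv (.app f v) →
      TmEq (.seq (.push (.app f v) a) (.pop a (.var x))) .fail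
  | occ_r (a : ℕ) {x : ℕ} {f : F} {v : Fin (ar f) → Val F ar} :
      x ∈ Val.fv (.app f v) →
      TmEq (.seq (.push (.var x) a) (.pop a (.app f v))) .fail
  -- permutation
  | perm {a b : ℕ} (s t : Val F ar) : a ≠ b →
      TmEq (.seq (.push s a) (.pop b t)) (.seq (.pop b t) (.push s a))

/-
The push and pop instances of the permutation axiom follow from the push–pop instance by
η-expansion. For a variable `x` fresh for `s` and `t`, β-reduction gives
`[s]a;[t]b = Ex.([t]b;b<x>;[s]a;[x]b)`; the axiom moves `[s]a` in front of `b<x>`, and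
extruding the binder leaves `[t]b;[s]a;Ex.(b<x>;[x]b) ≤ [t]b;[s]a` by η. Exchanging the roles
of the two pushes gives the reverse inequality. The pop case is the mirror image, using the
other β-axiom.
-/

local infix:50 " ≐ " => TmEq

instance : Trans (@TmEq F ar) (@TmEq F ar) (@TmEq F ar) := ⟨TmEq.trans⟩

lemma Val.fv_finite (t : Val F ar) : t.fv.Finite := by
  induction t with
  | var x => exact Set.finite_singleton x
  | app f v ih => exact Set.finite_iUnion ih

lemma Val.exists_fresh (s t : Val F ar) : ∃ x, x ∉ s.fv ∧ x ∉ t.fv := by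
  obtain ⟨x, hx⟩ := (s.fv_finite.union t.fv_finite).infinite_compl.nonempty
  exact ⟨x, fun h => hx (Or.inl h), fun h => hx (Or.inr h)⟩

lemma Val.subst_single_of_notMem {x : ℕ} (t : Val F ar) {s : Val F ar} (h : x ∉ s.fv) :
    s.subst (Subst.single x t) = s := by
  induction s with
  | var y =>
    have hyx : y ≠ x := fun e => h (e ▸ Set.mem_singleton y)
    simp [Val.subst, Subst.single, Function.update_of_ne hyx]
  | app f v ih =>
    simp only [Val.fv, Set.mem_iUnion, not_exists] at h
    simp only [Val.subst]
    exact congrArg _ (funext fun i => ih i (h i))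

lemma Subst.single_self (x : ℕ) (t : Val F ar) : Subst.single x t x = t := by
  simp [Subst.single]

lemma TmEq.seq_assoc_swap {M N N' P : Tm F ar} (h : .seq M N ≐ .seq N' M) :
    .seq M (.seq N P) ≐ .seq N' (.seq M P) :=
  calc _ ≐ _ := (seq_assoc M N P).symm
    _ ≐ _ := seq_congr h (refl P)
    _ ≐ _ := seq_assoc N' M P

def TmLe (M N : Tm F ar) : Prop := TmEq (.sum M N) N

namespace TmLe

lemma antisymm {M N : Tm F ar} (h₁ : TmLe M N) (h₂ : TmLe N M) : M ≐ N :=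
  (h₂.symm.trans (TmEq.sum_comm N M)).trans h₁

lemma congr {M M' N N' : Tm F ar} (hM : M ≐ M') (hN : N ≐ N') (h : TmLe M N) :
    TmLe M' N' :=
  ((TmEq.sum_congr hM.symm hN.symm).trans h).trans hN

lemma seq_left {M N : Tm F ar} (K : Tm F ar) (h : TmLe M N) : TmLe (.seq K M) (.seq K N) :=
  (TmEq.dist_l M N K).symm.trans (TmEq.seq_congr (TmEq.refl K) h)

lemma seq_right {M N : Tm F ar} (K : Tm F ar) (h : TmLe M N) : TmLe (.seq M K) (.seq N K) :=
  (TmEq.dist_r M N K).symm.trans (TmEq.seq_congr h (TmEq.refl K))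

lemma nu_pop_push_le_skip (x a : ℕ) :
    TmLe (.nu x (.seq (.pop a (.var x)) (.push (.var x) a))) (Tm.skip : Tm F ar) :=
  TmEq.eta x a

end TmLe

lemma push_seq_push_le {a b : ℕ} (hab : a ≠ b) (s t : Val F ar) :
    TmLe (.seq (.push s a) (.push t b)) (.seq (.push t b) (.push s a)) := by
  obtain ⟨x, hxs, hxt⟩ := Val.exists_fresh s t
  have hβ := TmEq.beta_l (x := x) b .skip (.seq (.push s a) (.push (.var x) b)) hxt
  simp only [Tm.subst, Val.subst, Subst.single_self, Val.subst_single_of_notMem t hxs] at hβ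
  have hexpand : .seq (.push s a) (.push t b) ≐
      .seq (.push t b) (.seq (.push s a) (.nu x (.seq (.pop b (.var x)) (.push (.var x) b)))) :=
    calc _ ≐ _ := (TmEq.seq_skip_l _).symm
      _ ≐ _ := hβ.symm
      _ ≐ _ := TmEq.nu_congr x (TmEq.seq_skip_l _)
      _ ≐ _ := TmEq.nu_congr x <| TmEq.seq_congr (.refl _) <|
          TmEq.seq_assoc_swap (TmEq.perm s (.var x) hab).symm
      _ ≐ _ := (TmEq.nu_seq_l (by simpa [Tm.fv] using hxt)).symm
      _ ≐ _ := TmEq.seq_congr (.refl _) (TmEq.nu_seq_l (by simpa [Tm.fv] using hxs)).symm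
  exact ((TmLe.nu_pop_push_le_skip x b).seq_left _).seq_left _ |>.congr hexpand.symm
    (TmEq.seq_congr (.refl _) (TmEq.seq_skip_r _))

lemma pop_seq_pop_le {a b : ℕ} (hab : a ≠ b) (s t : Val F ar) :
    TmLe (.seq (.pop b t) (.pop a s)) (.seq (.pop a s) (.pop b t)) := by
  obtain ⟨x, hxs, hxt⟩ := Val.exists_fresh s t
  have hβ := TmEq.beta_r (x := x) b (.seq (.pop b (.var x)) (.pop a s)) .skip hxt
  simp only [Tm.subst, Val.subst, Subst.single_self, Val.subst_single_of_notMem t hxs] at hβ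
  have hexpand : .seq (.pop b t) (.pop a s) ≐
      .seq (.nu x (.seq (.pop b (.var x)) (.push (.var x) b)))
        (.seq (.pop a s) (.seq (.pop b t) .skip)) :=
    calc _ ≐ _ := (TmEq.seq_skip_r _).symm
      _ ≐ _ := hβ.symm
      _ ≐ _ := TmEq.nu_congr x (TmEq.seq_assoc _ _ _)
      _ ≐ _ := TmEq.nu_congr x <| TmEq.seq_congr (.refl _) <|
          TmEq.seq_assoc_swap (TmEq.perm (.var x) s hab.symm).symm
      _ ≐ _ := TmEq.nu_congr x (TmEq.seq_assoc _ _ _).symm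
      _ ≐ _ := (TmEq.nu_seq_r (by simpa [Tm.fv] using ⟨hxs, hxt⟩)).symm
  exact (TmLe.nu_pop_push_le_skip x b).seq_right _ |>.congr hexpand.symm
    ((TmEq.seq_skip_l _).trans (TmEq.seq_congr (.refl _) (TmEq.seq_skip_r _)))

/-- In the equational theory of the RMC, for distinct
locations `a ≠ b` the permutation equations `[s]a;[t]b = [t]b;[s]a` and
`a<s>;b<t> = b<t>;a<s>` are derivable. -/
theorem permutation_derivable (F : Type) (ar : F → ℕ)
    (a b : ℕ) (hab : a ≠ b) (s t : Val F ar) :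
    TmEq (.seq (.push s a) (.push t b)) (.seq (.push t b) (.push s a)) ∧
    TmEq (Tm.seq (.pop a s) (.pop b t)) (.seq (.pop b t) (.pop a s)) :=
  ⟨(push_seq_push_le hab s t).antisymm (push_seq_push_le hab.symm t s),
    (pop_seq_pop_le hab.symm t s).antisymm (pop_seq_pop_le hab s t)⟩


end RMC
end

section
/- Basic properties of the simply-typed RMC: (subject reduction) if M : k_A > n_A and M → N then N : k_A > n_A; (expansion) if M : k_A > n_A then M : k_A + m_A > m_A + n_A for every memory type m_A; (duality) if M : k_A > n_A then M† : n_A > k_A. -/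
namespace RMC


variable {F : Type} {ar : F → ℕ}

/-- Linear contexts `L{ } ::= { } | M;L{ } | L{ };M`. -/
inductive LCtx (F : Type) (ar : F → ℕ) : Type
  | hole
  | seqL (M : Tm F ar) (L : LCtx F ar)
  | seqR (L : LCtx F ar) (M : Tm F ar)

/-- Filling the hole of a linear context. -/
def LCtx.fill : LCtx F ar → Tm F ar → Tm F ar
  | .hole, N => N
  | .seqL M L, N => .seq M (L.fill N)
  | .seqR L M, N => .seq (L.fill N) M

/-- The reduction relation of the RMC: the context closure of the
Kleene-algebra, new-variable, β-, unification- and permutation-rules. -/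
inductive Red : Tm F ar → Tm F ar → Prop
  -- Kleene algebra
  | star_unfold (M : Tm F ar) : Red (.star M) (.sum .skip (.seq M (.star M)))
  | dist_r {M N P : Tm F ar} : (∀ M' N' : Tm F ar, P ≠ .sum M' N') →
      Red (.seq (.sum M N) P) (.sum (.seq M P) (.seq N P))
  | dist_l (M N P : Tm F ar) : Red (.seq P (.sum M N)) (.sum (.seq P M) (.seq P N))
  | sum_zero_r (M : Tm F ar) : Red (.sum M .fail) M
  | sum_zero_l (M : Tm F ar) : Red (.sum .fail M) M
  | skip_seq (M : Tm F ar) : Red (.seq .skip M) M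
  | seq_zero (M : Tm F ar) : Red (.seq M .fail) .fail
  | zero_seq (M : Tm F ar) : Red (.seq .fail M) .fail
  -- new variable
  | nu_elim {x : ℕ} {M : Tm F ar} : x ∉ Tm.fv M → Red (.nu x M) M
  | nu_lift {x : ℕ} {M N : Tm F ar} : x ∉ Tm.fv M →
      Red (.seq M (.nu x N)) (.nu x (.seq M N))
  | nu_sum (x : ℕ) (M N : Tm F ar) : Red (.nu x (.sum M N)) (.sum (.nu x M) (.nu x N))
  -- β
  | beta_l {x : ℕ} {t : Val F ar} (a : ℕ) (L : LCtx F ar) (M : Tm F ar) :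
      x ∉ Val.fv t →
      Red (.nu x (L.fill (.seq (.push t a) (.seq (.pop a (.var x)) M))))
        (.nu x (Tm.subst (Subst.single x t) (L.fill M)))
  | beta_r {x : ℕ} {t : Val F ar} (a : ℕ) (L : LCtx F ar) (M : Tm F ar) :
      x ∉ Val.fv t →
      Red (.nu x (L.fill (.seq (.push (.var x) a) (.seq (.pop a t) M))))
        (.nu x (Tm.subst (Subst.single x t) (L.fill M)))
  -- unification
  | ups_var (x a : ℕ) (M : Tm F ar) :
      Red (.seq (.push (.var x) a) (.seq (.pop a (.var x)) M)) M
  | ups_app (a : ℕ) (f : F) (v w : Fin (ar f) → Val F ar) (M : Tm F ar) :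
      Red (.seq (.push (.app f v) a) (.seq (.pop a (.app f w)) M))
        (pushSeqThen a (List.ofFn v) (popSeqThen a (List.ofFn w) M))
  | ups_clash (a : ℕ) {f g : F} (v : Fin (ar f) → Val F ar) (w : Fin (ar g) → Val F ar)
      (M : Tm F ar) : f ≠ g →
      Red (.seq (.push (.app f v) a) (.seq (.pop a (.app g w)) M)) .fail
  | occ_l (a : ℕ) {x : ℕ} {f : F} {v : Fin (ar f) → Val F ar} (M : Tm F ar) :
      x ∈ Val.fv (.app f v) →
      Red (.seq (.push (.app f v) a) (.seq (.pop a (.var x)) M)) .fail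
  | occ_r (a : ℕ) {x : ℕ} {f : F} {v : Fin (ar f) → Val F ar} (M : Tm F ar) :
      x ∈ Val.fv (.app f v) →
      Red (.seq (.push (.var x) a) (.seq (.pop a (.app f v)) M)) .fail
  -- permutation
  | perm {a b : ℕ} (t s : Val F ar) (M : Tm F ar) : a ≠ b →
      Red (.seq (.push t a) (.seq (.pop b s) M)) (.seq (.pop b s) (.seq (.push t a) M))
  -- closure under all contexts
  | seq_congr_l {M M' : Tm F ar} (N : Tm F ar) : Red M M' → Red (.seq M N) (.seq M' N)
  | seq_congr_r {N N' : Tm F ar} (M : Tm F ar) : Red N N' → Red (.seq M N) (.seq M N')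
  | sum_congr_l {M M' : Tm F ar} (N : Tm F ar) : Red M M' → Red (.sum M N) (.sum M' N)
  | sum_congr_r {N N' : Tm F ar} (M : Tm F ar) : Red N N' → Red (.sum M N) (.sum M N')
  | star_congr {M M' : Tm F ar} : Red M M' → Red (.star M) (.star M')
  | nu_congr {M M' : Tm F ar} (x : ℕ) : Red M M' → Red (.nu x M) (.nu x M')

/-- Memory types: a natural number (stack arity) for each location, zero for
all but finitely many locations. -/
abbrev MTy := ℕ →₀ ℕ

/-- The simply-typed RMC: `Ty M m n` is the typing judgement `M : m_A > n_A`,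
giving the input and output arity of `M` at each location. -/
inductive Ty : Tm F ar → MTy → MTy → Prop
  | skip (n : MTy) : Ty .skip n n
  | seq {M N : Tm F ar} {k m n : MTy} : Ty M k m → Ty N m n → Ty (.seq M N) k n
  | fail (m n : MTy) : Ty .fail m n
  | sum {M N : Tm F ar} {m n : MTy} : Ty M m n → Ty N m n → Ty (.sum M N) m n
  | star {M : Tm F ar} {n : MTy} : Ty M n n → Ty (.star M) n n
  | nu {M : Tm F ar} {m n : MTy} (x : ℕ) : Ty M m n → Ty (.nu x M) m n
  | push (t : Val F ar) (a : ℕ) (n : MTy) : Ty (.push t a) n (n + Finsupp.single a 1)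
  | pop (a : ℕ) (t : Val F ar) (n : MTy) : Ty (.pop a t) (Finsupp.single a 1 + n) n

/-- Typing is invariant under substitution. -/
lemma ty_subst {M : Tm F ar} {k n : MTy} (h : Ty M k n) (σ : Subst F ar) :
    Ty (M.subst σ) k n := by
  induction h with
  | skip n => exact Ty.skip n
  | seq h1 h2 ih1 ih2 => exact Ty.seq ih1 ih2
  | fail m n => exact Ty.fail m n
  | sum h1 h2 ih1 ih2 => exact Ty.sum ih1 ih2
  | star h ih => exact Ty.star ih
  | nu x h ih => exact Ty.nu x ih
  | push t a n => exact Ty.push _ a n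
  | pop a t n => exact Ty.pop a _ n

/-- Linear contexts: extraction of the type of the hole. -/
lemma fill_ty {L : LCtx F ar} {P : Tm F ar} {k n : MTy} (h : Ty (L.fill P) k n) :
    ∃ k' n', Ty P k' n' ∧ ∀ P' : Tm F ar, Ty P' k' n' → Ty (L.fill P') k n := by
  induction L generalizing k n with
  | hole => exact ⟨k, n, h, fun _ h' => h'⟩
  | seqL M L ih =>
      cases h with
      | seq h1 h2 =>
        obtain ⟨k', n', hP, hre⟩ := ih h2
        exact ⟨k', n', hP, fun P' h' => Ty.seq h1 (hre P' h')⟩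
  | seqR L M ih =>
      cases h with
      | seq h1 h2 =>
        obtain ⟨k', n', hP, hre⟩ := ih h1
        exact ⟨k', n', hP, fun P' h' => Ty.seq (hre P' h') h2⟩

lemma seq_inv {M N : Tm F ar} {k n : MTy} (h : Ty (.seq M N) k n) :
    ∃ m, Ty M k m ∧ Ty N m n := by
  cases h with | seq h1 h2 => exact ⟨_, h1, h2⟩

lemma push_inv {t : Val F ar} {a : ℕ} {p q : MTy} (h : Ty (.push t a) p q) :
    q = p + Finsupp.single a 1 := by cases h; rfl

lemma pop_inv {t : Val F ar} {a : ℕ} {p q : MTy} (h : Ty (.pop a t) p q) :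
    p = Finsupp.single a 1 + q := by cases h; rfl

/-- A push-pop redex at the same location types as its continuation. -/
lemma redex_ty {t s : Val F ar} {a : ℕ} {M : Tm F ar} {k n : MTy}
    (h : Ty (.seq (.push t a) (.seq (.pop a s) M)) k n) : Ty M k n := by
  obtain ⟨m1, h1, h2⟩ := seq_inv h
  obtain ⟨m2, h3, h4⟩ := seq_inv h2
  have e1 := push_inv h1
  have e2 := pop_inv h3
  rw [e1] at e2
  have : m2 = k := by
    rw [add_comm (Finsupp.single a 1) m2] at e2
    exact (add_right_cancel e2).symm
  rwa [this] at h4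

lemma popSeqThen_ty {a : ℕ} (ts : List (Val F ar)) {M : Tm F ar} {m n : MTy}
    (h : Ty M m n) : Ty (popSeqThen a ts M) (ts.length • Finsupp.single a 1 + m) n := by
  induction ts generalizing M m with
  | nil => simpa [popSeqThen] using h
  | cons t ts ih =>
      have : Ty (.seq (.pop a t) M) (Finsupp.single a 1 + m) n :=
        Ty.seq (Ty.pop a t m) h
      have h2 := ih this
      have heq : (t :: ts).length • Finsupp.single a 1 + m
          = ts.length • Finsupp.single a 1 + (Finsupp.single a 1 + m) := by
        simp [List.length_cons, succ_nsmul, add_assoc, add_comm]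
      rw [heq]
      simpa [popSeqThen] using h2

lemma pushSeqThen_ty {a : ℕ} (ts : List (Val F ar)) {M : Tm F ar} {k n : MTy}
    (h : Ty M (k + ts.length • Finsupp.single a 1) n) : Ty (pushSeqThen a ts M) k n := by
  induction ts generalizing k with
  | nil => simpa [pushSeqThen] using h
  | cons t ts ih =>
      have h' : Ty M (k + Finsupp.single a 1 + ts.length • Finsupp.single a 1) n := by
        have heq : k + Finsupp.single a 1 + ts.length • Finsupp.single a 1
            = k + (t :: ts).length • Finsupp.single a 1 := by
          simp [List.length_cons, succ_nsmul, add_assoc, add_comm]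
        rwa [heq]
      have := ih h'
      exact Ty.seq (Ty.push t a k) this

/-- Subject reduction. -/
lemma subject_reduction {M N : Tm F ar} (r : Red M N) :
    ∀ {k n : MTy}, Ty M k n → Ty N k n := by
  induction r with
  | star_unfold M =>
      intro k n h
      cases h with
      | star h => exact Ty.sum (Ty.skip _) (Ty.seq h (Ty.star h))
  | dist_r hP =>
      intro k n h
      cases h with
      | seq h1 h2 =>
        cases h1 with
        | sum hM hN => exact Ty.sum (Ty.seq hM h2) (Ty.seq hN h2)
  | dist_l M N P =>
      intro k n h
      cases h with
      | seq h1 h2 =>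
        cases h2 with
        | sum hM hN => exact Ty.sum (Ty.seq h1 hM) (Ty.seq h1 hN)
  | sum_zero_r M => intro k n h; cases h with | sum h1 h2 => exact h1
  | sum_zero_l M => intro k n h; cases h with | sum h1 h2 => exact h2
  | skip_seq M =>
      intro k n h
      cases h with
      | seq h1 h2 => cases h1; exact h2
  | seq_zero M => intro k n h; exact Ty.fail k n
  | zero_seq M => intro k n h; exact Ty.fail k n
  | nu_elim hx => intro k n h; cases h with | nu x h => exact h
  | nu_lift hx =>
      intro k n h
      cases h with
      | seq h1 h2 =>
        cases h2 with
        | nu x hN => exact Ty.nu _ (Ty.seq h1 hN)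
  | nu_sum x M N =>
      intro k n h
      cases h with
      | nu x h =>
        cases h with
        | sum h1 h2 => exact Ty.sum (Ty.nu _ h1) (Ty.nu _ h2)
  | beta_l a L M hx =>
      intro k n h
      cases h with
      | nu x h =>
        obtain ⟨k', n', hP, hre⟩ := fill_ty h
        exact Ty.nu _ (ty_subst (hre M (redex_ty hP)) _)
  | beta_r a L M hx =>
      intro k n h
      cases h with
      | nu x h =>
        obtain ⟨k', n', hP, hre⟩ := fill_ty h
        exact Ty.nu _ (ty_subst (hre M (redex_ty hP)) _)
  | ups_var x a M => intro k n h; exact redex_ty h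
  | ups_app a f v w M =>
      intro k n h
      have hM := redex_ty h
      apply pushSeqThen_ty
      have := popSeqThen_ty (a := a) (List.ofFn w) hM
      have heq : k + (List.ofFn v).length • Finsupp.single a 1
          = (List.ofFn w).length • Finsupp.single a 1 + k := by
        simp [add_comm]
      rwa [heq]
  | ups_clash a v w M hfg => intro k n h; exact Ty.fail k n
  | occ_l a M hx => intro k n h; exact Ty.fail k n
  | occ_r a M hx => intro k n h; exact Ty.fail k n
  | @perm a b t s M hab =>
      intro k n h
      obtain ⟨m1, h1, h2⟩ := seq_inv h
      obtain ⟨m, h3, h4⟩ := seq_inv h2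
      have h5 : k + Finsupp.single a 1 = Finsupp.single b 1 + m := by
        rw [← push_inv h1, ← pop_inv h3]
      set m' : MTy := m - Finsupp.single a 1 with hm'
      have hma : 1 ≤ m a := by
        have := DFunLike.congr_fun h5 a
        simp [Finsupp.add_apply, Finsupp.single_apply, Ne.symm hab] at this
        omega
      have e2 : m' + Finsupp.single a 1 = m := by
        ext c
        rcases eq_or_ne a c with rfl | hca
        · simp [hm', Finsupp.add_apply, Finsupp.tsub_apply, Finsupp.single_apply]
          omega
        · simp [hm', Finsupp.add_apply, Finsupp.tsub_apply, Finsupp.single_apply, hca]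
      have e1 : Finsupp.single b 1 + m' = k := by
        have h6 : k + Finsupp.single a 1
            = (Finsupp.single b 1 + m') + Finsupp.single a 1 := by
          rw [add_assoc, e2]; exact h5
        exact (add_right_cancel h6).symm
      have hpop : Ty (Tm.pop b s : Tm F ar) k m' := by
        rw [← e1]; exact Ty.pop b s m'
      have hpush : Ty (Tm.push t a : Tm F ar) m' m := by
        rw [← e2]; exact Ty.push t a m'
      exact Ty.seq hpop (Ty.seq hpush h4)
  | seq_congr_l N r ih =>
      intro k n h
      cases h with | seq h1 h2 => exact Ty.seq (ih h1) h2
  | seq_congr_r M r ih =>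
      intro k n h
      cases h with | seq h1 h2 => exact Ty.seq h1 (ih h2)
  | sum_congr_l N r ih =>
      intro k n h
      cases h with | sum h1 h2 => exact Ty.sum (ih h1) h2
  | sum_congr_r M r ih =>
      intro k n h
      cases h with | sum h1 h2 => exact Ty.sum h1 (ih h2)
  | star_congr r ih =>
      intro k n h
      cases h with | star h => exact Ty.star (ih h)
  | nu_congr x r ih =>
      intro k n h
      cases h with | nu _ h => exact Ty.nu x (ih h)

/-- Expansion. -/
lemma ty_expand {M : Tm F ar} {k n : MTy} (h : Ty M k n) (m : MTy) :
    Ty M (k + m) (m + n) := by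
  induction h generalizing m with
  | skip n => rw [add_comm]; exact Ty.skip _
  | @seq M' N' k' mm n' h1 h2 ih1 ih2 =>
      exact Ty.seq (ih1 m) (by rw [add_comm m mm]; exact ih2 m)
  | fail _ _ => exact Ty.fail _ _
  | sum h1 h2 ih1 ih2 => exact Ty.sum (ih1 m) (ih2 m)
  | @star M' n' h ih =>
      rw [add_comm m n']
      exact Ty.star (by have := ih m; rwa [add_comm m n'] at this)
  | nu x h ih => exact Ty.nu x (ih m)
  | push t a n =>
      have : m + (n + Finsupp.single a 1) = (n + m) + Finsupp.single a 1 := by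
        rw [← add_assoc, add_comm m n]
      rw [this]
      exact Ty.push t a (n + m)
  | pop a t n =>
      have : Finsupp.single a 1 + n + m = Finsupp.single a 1 + (m + n) := by
        rw [add_assoc, add_comm n m]
      rw [this]
      exact Ty.pop a t (m + n)

/-- Duality. -/
lemma ty_dagger {M : Tm F ar} {k n : MTy} (h : Ty M k n) : Ty M.dagger n k := by
  induction h with
  | skip n => exact Ty.skip n
  | seq h1 h2 ih1 ih2 => exact Ty.seq ih2 ih1
  | fail m n => exact Ty.fail n m
  | sum h1 h2 ih1 ih2 => exact Ty.sum ih1 ih2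
  | star h ih => exact Ty.star ih
  | nu x h ih => exact Ty.nu x ih
  | push t a n => rw [Tm.dagger, add_comm]; exact Ty.pop a t n
  | pop a t n => rw [Tm.dagger, add_comm]; exact Ty.push t a n

/-- Basic properties of the simply-typed RMC:
subject reduction, expansion, and duality. -/
theorem simply_typed_properties (F : Type) (ar : F → ℕ) :
    (∀ (M N : Tm F ar) (k n : MTy), Ty M k n → Red M N → Ty N k n) ∧
    (∀ (M : Tm F ar) (k n : MTy), Ty M k n → ∀ m : MTy, Ty M (k + m) (m + n)) ∧
    (∀ (M : Tm F ar) (k n : MTy), Ty M k n → Ty M.dagger n k) := by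
  exact ⟨fun M N k n h r => subject_reduction r h,
    fun M k n h m => ty_expand h m,
    fun M k n h => ty_dagger h⟩


end RMC
end

section
/- The relational machine respects types: if a machine state (S_A, M, K) has type 0 > n_A and there is a machine run from (S_A, M, K) to (T_A, N, L), then (T_A, N, L) also has type 0 > n_A. -/
namespace RMC


variable {F : Type} {ar : F → ℕ}

/-- Continuation stacks. -/
abbrev Cont (F : Type) (ar : F → ℕ) := List (Tm F ar)

/-- Applying a substitution to a continuation stack. -/
def Cont.subst (σ : Subst F ar) (K : Cont F ar) : Cont F ar := K.map (Tm.subst σ)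

/-- Free variables of a continuation stack. -/
def Cont.fv (K : Cont F ar) : Set ℕ := ⋃ M ∈ K, Tm.fv M

/-- States of the relational abstract machine: a memory, a term, and a
continuation stack. -/
structure MState (F : Type) (ar : F → ℕ) where
  mem : Mem F ar
  tm : Tm F ar
  cont : Cont F ar

/-- The (non-deterministic) transitions of the relational abstract machine. -/
inductive Step : MState F ar → MState F ar → Prop
  | skip {S : Mem F ar} {M : Tm F ar} {K : Cont F ar} :
      Step ⟨S, .skip, M :: K⟩ ⟨S, M, K⟩
  | seq {S : Mem F ar} {M N : Tm F ar} {K : Cont F ar} :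
      Step ⟨S, .seq M N, K⟩ ⟨S, M, N :: K⟩
  | star_skip {S : Mem F ar} {M : Tm F ar} {K : Cont F ar} :
      Step ⟨S, .star M, K⟩ ⟨S, .skip, K⟩
  | star_unfold {S : Mem F ar} {M : Tm F ar} {K : Cont F ar} :
      Step ⟨S, .star M, K⟩ ⟨S, .seq M (.star M), K⟩
  | sum_l {S : Mem F ar} {M N : Tm F ar} {K : Cont F ar} :
      Step ⟨S, .sum M N, K⟩ ⟨S, M, K⟩
  | sum_r {S : Mem F ar} {M N : Tm F ar} {K : Cont F ar} :
      Step ⟨S, .sum M N, K⟩ ⟨S, N, K⟩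
  | push {S : Mem F ar} {t : Val F ar} {a : ℕ} {K : Cont F ar} :
      Step ⟨S, .push t a, K⟩ ⟨Function.update S a (t :: S a), .skip, K⟩
  | nu {S : Mem F ar} {x : ℕ} {M : Tm F ar} {K : Cont F ar} {y : ℕ} :
      y ∉ Tm.fv M → y ∉ Mem.fv S → y ∉ Cont.fv K → y ≠ x →
      Step ⟨S, .nu x M, K⟩ ⟨S, Tm.subst (Subst.single x (.var y)) M, K⟩
  | pop_var_same {S : Mem F ar} {a x : ℕ} {rest : List (Val F ar)} {K : Cont F ar} :
      S a = .var x :: rest →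
      Step ⟨S, .pop a (.var x), K⟩ ⟨Function.update S a rest, .skip, K⟩
  | pop_app {S : Mem F ar} {a : ℕ} {f : F} {v w : Fin (ar f) → Val F ar}
      {rest : List (Val F ar)} {K : Cont F ar} :
      S a = .app f v :: rest →
      Step ⟨S, .pop a (.app f w), K⟩
        ⟨Function.update S a ((List.ofFn v).reverse ++ rest), popSeq a (List.ofFn w), K⟩
  | pop_var_subst {S : Mem F ar} {a x : ℕ} {rest : List (Val F ar)} {t : Val F ar}
      {K : Cont F ar} :
      S a = .var x :: rest → x ∉ Val.fv t →
      Step ⟨S, .pop a t, K⟩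
        ⟨Mem.subst (Subst.single x t) (Function.update S a rest), .skip,
          Cont.subst (Subst.single x t) K⟩
  | pop_subst_var {S : Mem F ar} {a x : ℕ} {rest : List (Val F ar)} {t : Val F ar}
      {K : Cont F ar} :
      S a = t :: rest → x ∉ Val.fv t →
      Step ⟨S, .pop a (.var x), K⟩
        ⟨Mem.subst (Subst.single x t) (Function.update S a rest), .skip,
          Cont.subst (Subst.single x t) K⟩

/-- A memory has memory type `n` when the stack at each location `a` has
length `n a`. -/
def MemTy (S : Mem F ar) (n : MTy) : Prop := ∀ a : ℕ, (S a).length = n a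

/-- Typing of continuation stacks. -/
inductive ContTy : Cont F ar → MTy → MTy → Prop
  | nil (n : MTy) : ContTy [] n n
  | cons {M : Tm F ar} {K : Cont F ar} {k m n : MTy} :
      Ty M k m → ContTy K m n → ContTy (M :: K) k n

/-- Typing of machine states: `(S, M, K) : 0 > n`. -/
def StateTy (st : MState F ar) (n : MTy) : Prop :=
  ∃ k m : MTy, MemTy st.mem k ∧ Ty st.tm k m ∧ ContTy st.cont m n

/-!
Each machine transition preserves the typing invariant, so by induction every state on a run
does. Typing ignores values, hence the substitutions performed by unification on memory,
term and continuation leave all types intact; what remains is stack-length bookkeeping.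
The only non-local case is popping `f(w)` against `f(v)`: one entry of stack `a` is replaced by
the `ar f` arguments `v`, and the machine continues with the `ar f` pops of `w`, of type
`(ar f)_a + m > m`.
-/

theorem Ty.subst {M : Tm F ar} {m n : MTy} (σ : Subst F ar) (h : Ty M m n) :
    Ty (M.subst σ) m n := by
  induction h with
  | skip n => exact .skip n
  | seq _ _ ihM ihN => exact .seq ihM ihN
  | fail m n => exact .fail m n
  | sum _ _ ihM ihN => exact .sum ihM ihN
  | star _ ih => exact .star ih
  | nu x _ ih => exact .nu x ih
  | push t a n => exact .push _ a n
  | pop a t n => exact .pop a _ n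

theorem ContTy.subst {K : Cont F ar} {m n : MTy} (σ : Subst F ar) (h : ContTy K m n) :
    ContTy (K.subst σ) m n := by
  induction h with
  | nil n => exact .nil n
  | cons hM _ ih => exact .cons (hM.subst σ) ih

theorem MemTy.subst {S : Mem F ar} {k : MTy} (σ : Subst F ar) (h : MemTy S k) :
    MemTy (S.subst σ) k := fun a => by
  simp only [Mem.subst, List.length_map, h a]

theorem MemTy.update {S : Mem F ar} {k k' : MTy} (h : MemTy S k) {a : ℕ} {l : List (Val F ar)}
    (hl : l.length = k' a) (hk : ∀ b ≠ a, k' b = k b) :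
    MemTy (Function.update S a l) k' := by
  intro b
  rcases eq_or_ne b a with rfl | hba
  · simpa using hl
  · rw [Function.update_of_ne hba, h b, hk b hba]

theorem MemTy.push {S : Mem F ar} {k : MTy} (h : MemTy S k) (t : Val F ar) (a : ℕ) :
    MemTy (Function.update S a (t :: S a)) (k + Finsupp.single a 1) :=
  h.update (by simp [h a]) fun b hba => by simp [Finsupp.single_eq_of_ne hba]

theorem MemTy.pop_append {S : Mem F ar} {n : MTy} {a : ℕ} {t : Val F ar}
    {rest : List (Val F ar)} (h : MemTy S (Finsupp.single a 1 + n)) (hS : S a = t :: rest)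
    (l : List (Val F ar)) :
    MemTy (Function.update S a (l ++ rest)) (Finsupp.single a l.length + n) := by
  have hrest : rest.length = n a := by simpa [hS, add_comm] using h a
  exact h.update (by simp [hrest]) fun b hba => by simp [Finsupp.single_eq_of_ne hba]

theorem MemTy.pop {S : Mem F ar} {n : MTy} {a : ℕ} {t : Val F ar} {rest : List (Val F ar)}
    (h : MemTy S (Finsupp.single a 1 + n)) (hS : S a = t :: rest) :
    MemTy (Function.update S a rest) n := by
  simpa using h.pop_append hS []

theorem Ty.popSeqThen (a : ℕ) (ts : List (Val F ar)) {M : Tm F ar} {m n : MTy}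
    (h : Ty M m n) : Ty (popSeqThen a ts M) (Finsupp.single a ts.length + m) n := by
  induction ts generalizing M m with
  | nil => simpa [RMC.popSeqThen] using h
  | cons t ts ih =>
    have hlen : Finsupp.single a ts.length + (Finsupp.single a 1 + m)
        = Finsupp.single a (t :: ts).length + m := by
      rw [← add_assoc, ← Finsupp.single_add, List.length_cons]
    simpa only [RMC.popSeqThen, List.foldl_cons, hlen] using ih ((Ty.pop a t m).seq h)

theorem Ty.popSeq (a : ℕ) (ts : List (Val F ar)) (n : MTy) :
    Ty (popSeq a ts) (Finsupp.single a ts.length + n) n :=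
  (Ty.skip n).popSeqThen a ts

theorem StateTy.of_step {s s' : MState F ar} {n : MTy} (h : Step s s') (hs : StateTy s n) :
    StateTy s' n := by
  obtain ⟨k, m, hS, hM, hK⟩ := hs
  cases h with
  | skip =>
    cases hM
    cases hK with
    | cons hM hK => exact ⟨_, _, hS, hM, hK⟩
  | seq =>
    cases hM with
    | seq hM hN => exact ⟨_, _, hS, hM, hK.cons hN⟩
  | star_skip => cases hM; exact ⟨_, _, hS, .skip _, hK⟩
  | star_unfold =>
    cases hM with
    | star hM => exact ⟨_, _, hS, hM.seq hM.star, hK⟩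
  | sum_l =>
    cases hM with
    | sum hM _ => exact ⟨_, _, hS, hM, hK⟩
  | sum_r =>
    cases hM with
    | sum _ hN => exact ⟨_, _, hS, hN, hK⟩
  | push => cases hM; exact ⟨_, _, hS.push _ _, .skip _, hK⟩
  | nu =>
    cases hM with
    | nu x hM => exact ⟨_, _, hS, hM.subst _, hK⟩
  | pop_var_same ha => cases hM; exact ⟨_, _, hS.pop ha, .skip _, hK⟩
  | @pop_app _ a _ _ w _ _ ha =>
    cases hM
    exact ⟨_, _, hS.pop_append ha _, by simpa using Ty.popSeq a (List.ofFn w) m, hK⟩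
  | pop_var_subst ha => cases hM; exact ⟨_, _, (hS.pop ha).subst _, .skip _, hK.subst _⟩
  | pop_subst_var ha => cases hM; exact ⟨_, _, (hS.pop ha).subst _, .skip _, hK.subst _⟩

/-- The relational machine respects types: states on any run
from a state of type `0 > n_A` have type `0 > n_A`. -/
theorem machine_respects_types (F : Type) (ar : F → ℕ)
    (s s' : MState F ar) (n : MTy)
    (hty : StateTy s n) (hrun : Relation.ReflTransGen Step s s') :
    StateTy s' n := by
  induction hrun with
  | refl => exact hty
  | tail _ hstep ih => exact ih.of_step hstep

end RMC
end
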